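/- Let Ω be a weighted simplicial complex on [n] with an action of a finite group G, let T ∈ ℝ^m ⊗ ⋯ ⊗ ℝ^m (n+1 factors), and let p_T := Σ_{j₀,…,jₙ=1}^m T_{j₀,…,jₙ} (x^[0]_{j₀})² ⋯ (x^[n]_{jₙ})². Then psd-rank_{(Ω,G)}(T) ≤ sos-rank_{(Ω,G)}(p_T), with equality if the action of G on [n] is free (i.e. g·i = i implies g = e). -/

import Mathlib

namespace PolyDec

open MvPolynomial

attribute [local instance] Classical.propDecidable

noncomputable section

/-! ### Weighted simplicial complexes -/

/-- `Ω` is a weighted simplicial complex on `[n] = {0,…,n}`. -/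
def IsWSC {n : ℕ} (Ω : Finset (Fin (n + 1)) → ℕ) : Prop :=
  (∀ S T : Finset (Fin (n + 1)), S ⊆ T → Ω S ∣ Ω T) ∧ ∀ i : Fin (n + 1), Ω {i} ≠ 0

/-- `F` is a facet of `Ω`: a maximal simplex. -/
def IsFacet {n : ℕ} (Ω : Finset (Fin (n + 1)) → ℕ) (F : Finset (Fin (n + 1))) : Prop :=
  Ω F ≠ 0 ∧ ∀ S : Finset (Fin (n + 1)), Ω S ≠ 0 → F ⊆ S → S = F

/-- `Ω` is connected: any two vertices are joined by a chain of vertices such that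
consecutive ones share a facet. -/
def Conn {n : ℕ} (Ω : Finset (Fin (n + 1)) → ℕ) : Prop :=
  ∀ i j : Fin (n + 1),
    Relation.ReflTransGen
      (fun a b => ∃ F : Finset (Fin (n + 1)), IsFacet Ω F ∧ a ∈ F ∧ b ∈ F) i j

/-- The multiset of facets `ℱ̃`: each facet `F` appears with multiplicity `Ω F`. -/
abbrev MultiFacet {n : ℕ} (Ω : Finset (Fin (n + 1)) → ℕ) : Type :=
  Σ F : {F : Finset (Fin (n + 1)) // IsFacet Ω F}, Fin (Ω F.1)

/-- The sub-multiset `ℱ̃ᵢ` of multifacets containing the vertex `i`. -/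
abbrev MFi {n : ℕ} (Ω : Finset (Fin (n + 1)) → ℕ) (i : Fin (n + 1)) : Type :=
  {F : MultiFacet Ω // i ∈ F.1.1}

/-- Restriction `α|ᵢ` of `α : ℱ̃ → I` to `ℱ̃ᵢ`. -/
def restr {n : ℕ} {Ω : Finset (Fin (n + 1)) → ℕ} {I : Type} (α : MultiFacet Ω → I)
    (i : Fin (n + 1)) : MFi Ω i → I :=
  fun F => α F.1

/-! ### Group actions on a weighted simplicial complex -/

/-- An action of a group `G` on the weighted simplicial complex `Ω`:
an action on the vertices leaving `Ω` invariant, together with a refinement to an action on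
the multiset of facets which is compatible with the collapse map. -/
structure GAct {n : ℕ} (Ω : Finset (Fin (n + 1)) → ℕ) (G : Type) [Group G] where
  act : G →* Equiv.Perm (Fin (n + 1))
  omega_inv : ∀ (g : G) (S : Finset (Fin (n + 1))), Ω (S.image (act g)) = Ω S
  actF : G →* Equiv.Perm (MultiFacet Ω)
  collapse : ∀ (g : G) (F : MultiFacet Ω), (actF g F).1.1 = F.1.1.image (act g)

variable {n : ℕ} {Ω : Finset (Fin (n + 1)) → ℕ} {G : Type} [Group G]

/-- The action is free on `ℱ̃`. -/
def GAct.Free (A : GAct Ω G) : Prop :=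
  ∀ (g : G) (F : MultiFacet Ω), A.actF g F = F → g = 1

/-- The action on the vertices is blending. -/
def GAct.Blending (A : GAct Ω G) : Prop :=
  ∀ gs : Fin (n + 1) → G,
    (Function.Surjective fun i => A.act (gs i) i) →
      ∃ g : G, ∀ i, A.act g i = A.act (gs i) i

theorem GAct.mem_shift (A : GAct Ω G) (g : G) (i : Fin (n + 1)) (F : MFi Ω (A.act g i)) :
    i ∈ (A.actF g⁻¹ F.1).1.1 := by
  rw [A.collapse]
  refine Finset.mem_image.2 ⟨A.act g i, F.2, ?_⟩
  rw [map_inv]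
  exact Equiv.symm_apply_apply _ _

/-- For `β : ℱ̃ᵢ → I`, the shifted function `ᵍβ : ℱ̃_{g·i} → I`, `(ᵍβ)(F) = β (g⁻¹·F)`. -/
def GAct.shift (A : GAct Ω G) (g : G) (i : Fin (n + 1)) {I : Type} (β : MFi Ω i → I) :
    MFi Ω (A.act g i) → I :=
  fun F => β ⟨A.actF g⁻¹ F.1, A.mem_shift g i F⟩

/-! ### Polynomial spaces -/

/-- The space `𝒫 = ℝ[x⁽⁰⁾,…,x⁽ⁿ⁾]`, where block `i` has `m i` variables. -/
abbrev PSpace {n : ℕ} (m : Fin (n + 1) → ℕ) : Type :=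
  MvPolynomial (Σ i : Fin (n + 1), Fin (m i)) ℝ

/-- The local space `ℝ[x⁽ⁱ⁾]`. -/
abbrev LSpace {n : ℕ} (m : Fin (n + 1) → ℕ) (i : Fin (n + 1)) : Type :=
  MvPolynomial (Fin (m i)) ℝ

/-- The inclusion `ℝ[x⁽ⁱ⁾] → 𝒫`. -/
def emb {n : ℕ} (m : Fin (n + 1) → ℕ) (i : Fin (n + 1)) : LSpace m i →ₐ[ℝ] PSpace m :=
  rename fun j => (⟨i, j⟩ : Σ i : Fin (n + 1), Fin (m i))

variable {m : Fin (n + 1) → ℕ}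

/-- The variable permutation `x⁽ⁱ⁾ ↦ x⁽ᵍ·ⁱ⁾` induced by `g`. -/
def permVar (A : GAct Ω G) (hm : ∀ (g : G) (i : Fin (n + 1)), m (A.act g i) = m i) (g : G) :
    (Σ i : Fin (n + 1), Fin (m i)) → Σ i : Fin (n + 1), Fin (m i) :=
  fun v => ⟨A.act g v.1, Fin.cast (hm g v.1).symm v.2⟩

/-- `p` is `G`-invariant: `p(x⁽ᵍ⁰⁾,…,x⁽ᵍⁿ⁾) = p(x⁽⁰⁾,…,x⁽ⁿ⁾)` for all `g ∈ G`. -/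
def GInvPoly (A : GAct Ω G) (hm : ∀ (g : G) (i : Fin (n + 1)), m (A.act g i) = m i)
    (p : PSpace m) : Prop :=
  ∀ g : G, rename (permVar A hm g) p = p

/-! ### Sums of squares, cones -/

/-- `p` is a sum of squares. -/
def IsSos {σ : Type} (p : MvPolynomial σ ℝ) : Prop :=
  ∃ (N : ℕ) (q : Fin N → MvPolynomial σ ℝ), p = ∑ k : Fin N, q k ^ 2

/-- `C` is a convex cone. -/
def IsConvexConeSet {V : Type} [AddCommMonoid V] [Module ℝ V] (C : Set V) : Prop :=
  ∀ p ∈ C, ∀ q ∈ C, ∀ a b : ℝ, 0 ≤ a → 0 ≤ b → a • p + b • q ∈ C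

/-- The local cones agree along orbits, `C⁽ᵍ·ⁱ⁾ = C⁽ⁱ⁾` (under the renaming identification). -/
def ConeCompat (A : GAct Ω G) (hm : ∀ (g : G) (i : Fin (n + 1)), m (A.act g i) = m i)
    (C : ∀ i : Fin (n + 1), Set (LSpace m i)) : Prop :=
  ∀ (g : G) (i : Fin (n + 1)) (q : LSpace m (A.act g i)),
    q ∈ C (A.act g i) ↔ rename (Fin.cast (hm g i)) q ∈ C i

/-- The separable cone `C_sep = C⁽⁰⁾ ⊗ ⋯ ⊗ C⁽ⁿ⁾`. -/
def SepCone {n : ℕ} (m : Fin (n + 1) → ℕ) (C : ∀ i : Fin (n + 1), Set (LSpace m i)) :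
    Set (PSpace m) :=
  {p | ∃ (r : ℕ) (q : Fin r → ∀ i : Fin (n + 1), LSpace m i),
    (∀ j i, q j i ∈ C i) ∧ p = ∑ j : Fin r, ∏ i : Fin (n + 1), emb m i (q j i)}

/-! ### Decompositions and ranks -/

/-- `p` has an `Ω`-decomposition with index set of size `r`. -/
def HasODec {n : ℕ} (Ω : Finset (Fin (n + 1)) → ℕ) (m : Fin (n + 1) → ℕ) (p : PSpace m)
    (r : ℕ) : Prop :=
  ∃ q : ∀ i : Fin (n + 1), (MFi Ω i → Fin r) → LSpace m i,
    p = ∑ α : MultiFacet Ω → Fin r, ∏ i : Fin (n + 1), emb m i (q i (restr α i))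

/-- The `Ω`-rank of `p` (`⊤` if there is no decomposition). -/
def ORank {n : ℕ} (Ω : Finset (Fin (n + 1)) → ℕ) (m : Fin (n + 1) → ℕ) (p : PSpace m) : ℕ∞ :=
  ⨅ r : {r : ℕ // HasODec Ω m p r}, (r.1 : ℕ∞)

/-- `p` has an `(Ω,G)`-decomposition with index set of size `r`. -/
def HasOGDec (A : GAct Ω G) (hm : ∀ (g : G) (i : Fin (n + 1)), m (A.act g i) = m i)
    (p : PSpace m) (r : ℕ) : Prop :=
  ∃ q : ∀ i : Fin (n + 1), (MFi Ω i → Fin r) → LSpace m i,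
    (p = ∑ α : MultiFacet Ω → Fin r, ∏ i : Fin (n + 1), emb m i (q i (restr α i))) ∧
    ∀ (g : G) (i : Fin (n + 1)) (β : MFi Ω i → Fin r),
      rename (Fin.cast (hm g i)) (q (A.act g i) (A.shift g i β)) = q i β

/-- The `(Ω,G)`-rank of `p`. -/
def OGRank (A : GAct Ω G) (hm : ∀ (g : G) (i : Fin (n + 1)), m (A.act g i) = m i)
    (p : PSpace m) : ℕ∞ :=
  ⨅ r : {r : ℕ // HasOGDec A hm p r}, (r.1 : ℕ∞)

/-- `p` has a decomposition on the simplex `Σₙ` (a plain tensor decomposition) of size `r`. -/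
def HasTDec {n : ℕ} (m : Fin (n + 1) → ℕ) (p : PSpace m) (r : ℕ) : Prop :=
  ∃ q : Fin r → ∀ i : Fin (n + 1), LSpace m i,
    p = ∑ j : Fin r, ∏ i : Fin (n + 1), emb m i (q j i)

/-- The tensor rank `rank_{Σₙ}(p)`. -/
def TRank {n : ℕ} (m : Fin (n + 1) → ℕ) (p : PSpace m) : ℕ∞ :=
  ⨅ r : {r : ℕ // HasTDec m p r}, (r.1 : ℕ∞)

/-- Separable `Ω`-decomposition w.r.t. the local cones `C`. -/
def HasSepODec {n : ℕ} (Ω : Finset (Fin (n + 1)) → ℕ) (m : Fin (n + 1) → ℕ)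
    (C : ∀ i : Fin (n + 1), Set (LSpace m i)) (p : PSpace m) (r : ℕ) : Prop :=
  ∃ q : ∀ i : Fin (n + 1), (MFi Ω i → Fin r) → LSpace m i,
    (p = ∑ α : MultiFacet Ω → Fin r, ∏ i : Fin (n + 1), emb m i (q i (restr α i))) ∧
    ∀ i β, q i β ∈ C i

/-- The separable `Ω`-rank. -/
def SepORank {n : ℕ} (Ω : Finset (Fin (n + 1)) → ℕ) (m : Fin (n + 1) → ℕ)
    (C : ∀ i : Fin (n + 1), Set (LSpace m i)) (p : PSpace m) : ℕ∞ :=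
  ⨅ r : {r : ℕ // HasSepODec Ω m C p r}, (r.1 : ℕ∞)

/-- Separable `(Ω,G)`-decomposition w.r.t. the local cones `C`. -/
def HasSepOGDec (A : GAct Ω G) (hm : ∀ (g : G) (i : Fin (n + 1)), m (A.act g i) = m i)
    (C : ∀ i : Fin (n + 1), Set (LSpace m i)) (p : PSpace m) (r : ℕ) : Prop :=
  ∃ q : ∀ i : Fin (n + 1), (MFi Ω i → Fin r) → LSpace m i,
    (p = ∑ α : MultiFacet Ω → Fin r, ∏ i : Fin (n + 1), emb m i (q i (restr α i))) ∧
    (∀ (g : G) (i : Fin (n + 1)) (β : MFi Ω i → Fin r),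
      rename (Fin.cast (hm g i)) (q (A.act g i) (A.shift g i β)) = q i β) ∧
    ∀ i β, q i β ∈ C i

/-- The separable `(Ω,G)`-rank. -/
def SepOGRank (A : GAct Ω G) (hm : ∀ (g : G) (i : Fin (n + 1)), m (A.act g i) = m i)
    (C : ∀ i : Fin (n + 1), Set (LSpace m i)) (p : PSpace m) : ℕ∞ :=
  ⨅ r : {r : ℕ // HasSepOGDec A hm C p r}, (r.1 : ℕ∞)

/-- Separable decomposition on the simplex `Σₙ`. -/
def HasSepTDec {n : ℕ} (m : Fin (n + 1) → ℕ) (C : ∀ i : Fin (n + 1), Set (LSpace m i))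
    (p : PSpace m) (r : ℕ) : Prop :=
  ∃ q : Fin r → ∀ i : Fin (n + 1), LSpace m i,
    (∀ j i, q j i ∈ C i) ∧ p = ∑ j : Fin r, ∏ i : Fin (n + 1), emb m i (q j i)

/-- The separable rank on the simplex. -/
def SepTRank {n : ℕ} (m : Fin (n + 1) → ℕ) (C : ∀ i : Fin (n + 1), Set (LSpace m i))
    (p : PSpace m) : ℕ∞ :=
  ⨅ r : {r : ℕ // HasSepTDec m C p r}, (r.1 : ℕ∞)

/-- `p` has a sum-of-squares `(Ω,G)`-decomposition of size `r`: a `G`-invariant family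
`𝔮 = (q_k)` with `p = ∑ q_k²` together with an `(Ω,G)`-decomposition of the family. -/
def HasSosOGDec (A : GAct Ω G) (hm : ∀ (g : G) (i : Fin (n + 1)), m (A.act g i) = m i)
    (p : PSpace m) (r : ℕ) : Prop :=
  ∃ (s : Fin (n + 1) → ℕ) (hs : ∀ (g : G) (i : Fin (n + 1)), s (A.act g i) = s i)
    (q : ∀ i : Fin (n + 1), Fin (s i) → (MFi Ω i → Fin r) → LSpace m i),
    (p = ∑ k : ∀ i : Fin (n + 1), Fin (s i),
        (∑ α : MultiFacet Ω → Fin r, ∏ i : Fin (n + 1), emb m i (q i (k i) (restr α i))) ^ 2) ∧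
    ∀ (g : G) (i : Fin (n + 1)) (kk : Fin (s i)) (β : MFi Ω i → Fin r),
      rename (Fin.cast (hm g i))
        (q (A.act g i) (Fin.cast (hs g i).symm kk) (A.shift g i β)) = q i kk β

/-- The sos `(Ω,G)`-rank. -/
def SosOGRank (A : GAct Ω G) (hm : ∀ (g : G) (i : Fin (n + 1)), m (A.act g i) = m i)
    (p : PSpace m) : ℕ∞ :=
  ⨅ r : {r : ℕ // HasSosOGDec A hm p r}, (r.1 : ℕ∞)

/-! ### Local degree -/

/-- Every monomial of `p` has degree at most `d` in each block of variables. -/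
def locDegLE {n : ℕ} (m : Fin (n + 1) → ℕ) (p : PSpace m) (d : ℕ) : Prop :=
  ∀ s ∈ p.support, ∀ i : Fin (n + 1), (∑ j : Fin (m i), s ⟨i, j⟩) ≤ d

/-- The local degree of `p`. -/
def locDeg {n : ℕ} (m : Fin (n + 1) → ℕ) (p : PSpace m) : ℕ :=
  sInf {d : ℕ | locDegLE m p d}

/-! ### Tensor decompositions -/

/-- `(Ω,G)`-decomposition of a tensor `T ∈ ℝ^mv ⊗ ⋯ ⊗ ℝ^mv`. -/
def HasTOGDec (A : GAct Ω G) (mv : ℕ) (T : (Fin (n + 1) → Fin mv) → ℝ) (r : ℕ) : Prop :=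
  ∃ v : ∀ i : Fin (n + 1), (MFi Ω i → Fin r) → Fin mv → ℝ,
    (∀ jf : Fin (n + 1) → Fin mv,
      T jf = ∑ α : MultiFacet Ω → Fin r, ∏ i : Fin (n + 1), v i (restr α i) (jf i)) ∧
    ∀ (g : G) (i : Fin (n + 1)) (β : MFi Ω i → Fin r), v (A.act g i) (A.shift g i β) = v i β

/-- The `(Ω,G)`-rank of a tensor. -/
def TOGRank (A : GAct Ω G) (mv : ℕ) (T : (Fin (n + 1) → Fin mv) → ℝ) : ℕ∞ :=
  ⨅ r : {r : ℕ // HasTOGDec A mv T r}, (r.1 : ℕ∞)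

/-- Nonnegative `(Ω,G)`-decomposition of a tensor. -/
def HasNNTOGDec (A : GAct Ω G) (mv : ℕ) (T : (Fin (n + 1) → Fin mv) → ℝ) (r : ℕ) : Prop :=
  ∃ v : ∀ i : Fin (n + 1), (MFi Ω i → Fin r) → Fin mv → ℝ,
    (∀ jf : Fin (n + 1) → Fin mv,
      T jf = ∑ α : MultiFacet Ω → Fin r, ∏ i : Fin (n + 1), v i (restr α i) (jf i)) ∧
    (∀ (g : G) (i : Fin (n + 1)) (β : MFi Ω i → Fin r), v (A.act g i) (A.shift g i β) = v i β) ∧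
    ∀ i β j, 0 ≤ v i β j

/-- The nonnegative `(Ω,G)`-rank of a tensor. -/
def NNTOGRank (A : GAct Ω G) (mv : ℕ) (T : (Fin (n + 1) → Fin mv) → ℝ) : ℕ∞ :=
  ⨅ r : {r : ℕ // HasNNTOGDec A mv T r}, (r.1 : ℕ∞)

/-- Positive semidefinite `(Ω,G)`-decomposition of a tensor. -/
def HasPsdTOGDec (A : GAct Ω G) (mv : ℕ) (T : (Fin (n + 1) → Fin mv) → ℝ) (r : ℕ) : Prop :=
  ∃ E : ∀ i : Fin (n + 1), Fin mv → Matrix (MFi Ω i → Fin r) (MFi Ω i → Fin r) ℝ,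
    (∀ i j, (E i j).PosSemidef) ∧
    (∀ (g : G) (i : Fin (n + 1)) (j : Fin mv) (β β' : MFi Ω i → Fin r),
      E (A.act g i) j (A.shift g i β) (A.shift g i β') = E i j β β') ∧
    ∀ jf : Fin (n + 1) → Fin mv,
      T jf = ∑ α : MultiFacet Ω → Fin r, ∑ α' : MultiFacet Ω → Fin r,
        ∏ i : Fin (n + 1), E i (jf i) (restr α i) (restr α' i)

/-- The positive semidefinite `(Ω,G)`-rank of a tensor. -/
def PsdTOGRank (A : GAct Ω G) (mv : ℕ) (T : (Fin (n + 1) → Fin mv) → ℝ) : ℕ∞ :=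
  ⨅ r : {r : ℕ // HasPsdTOGDec A mv T r}, (r.1 : ℕ∞)

/-- The polynomial `p_T = ∑ T_{j₀…jₙ} (x⁽⁰⁾_{j₀})² ⋯ (x⁽ⁿ⁾_{jₙ})²` associated to a tensor. -/
def pT {n : ℕ} (mv : ℕ) (T : (Fin (n + 1) → Fin mv) → ℝ) :
    PSpace (fun _ : Fin (n + 1) => mv) :=
  ∑ jf : Fin (n + 1) → Fin mv, MvPolynomial.C (T jf) *
    ∏ i : Fin (n + 1), X (⟨i, jf i⟩ : Σ _ : Fin (n + 1), Fin mv) ^ 2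

/-! ### The Gram map -/

/-- Exponent vectors of monomials of degree at most `d` in `mv` variables. -/
abbrev Mon (mv d : ℕ) : Type := {k : Fin mv → Fin (d + 1) // (∑ j : Fin mv, (k j).val) ≤ d}

/-- The monomial at site `i` with exponent vector `k`. -/
def monAt {n : ℕ} {mv d : ℕ} (i : Fin (n + 1)) (k : Mon mv d) :
    PSpace (fun _ : Fin (n + 1) => mv) :=
  ∏ j : Fin mv, X (⟨i, j⟩ : Σ _ : Fin (n + 1), Fin mv) ^ (k.1 j).val

/-- The Gram map `𝒢(M) = 𝔪ᵗ M 𝔪`. -/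
def gram {n : ℕ} {mv d : ℕ}
    (M : Matrix (Fin (n + 1) → Mon mv d) (Fin (n + 1) → Mon mv d) ℝ) :
    PSpace (fun _ : Fin (n + 1) => mv) :=
  ∑ k : Fin (n + 1) → Mon mv d, ∑ k' : Fin (n + 1) → Mon mv d,
    M k k' • ∏ i : Fin (n + 1), (monAt i (k i) * monAt i (k' i))

/-! ### Homogeneous Gram map, norms -/

/-- Exponent vectors of monomials of degree exactly `d` in `mv + 1` variables. -/
abbrev MonH (mv d : ℕ) : Type :=
  {k : Fin (mv + 1) → Fin (d + 1) // (∑ j : Fin (mv + 1), (k j).val) = d}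

/-- The homogeneous monomial at site `i` with exponent vector `k`. -/
def monHAt {n : ℕ} {mv d : ℕ} (i : Fin (n + 1)) (k : MonH mv d) :
    PSpace (fun _ : Fin (n + 1) => mv + 1) :=
  ∏ j : Fin (mv + 1), X (⟨i, j⟩ : Σ _ : Fin (n + 1), Fin (mv + 1)) ^ (k.1 j).val

/-- The Gram map in the homogeneous setting. -/
def gramH {n : ℕ} {mv d : ℕ}
    (M : Matrix (Fin (n + 1) → MonH mv d) (Fin (n + 1) → MonH mv d) ℝ) :
    PSpace (fun _ : Fin (n + 1) => mv + 1) :=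
  ∑ k : Fin (n + 1) → MonH mv d, ∑ k' : Fin (n + 1) → MonH mv d,
    M k k' • ∏ i : Fin (n + 1), (monHAt i (k i) * monHAt i (k' i))

/-- The largest singular value (ℓ²-operator norm) of a real square matrix. -/
def sigmaMax {ι : Type} [Fintype ι] (M : Matrix ι ι ℝ) : ℝ :=
  sSup {r : ℝ | ∃ y : ι → ℝ, (∑ t, y t ^ 2) ≤ 1 ∧ r = Real.sqrt (∑ t, (M.mulVec y t) ^ 2)}

/-- The supremum norm of `p` on `𝕊 = 𝕊^m × ⋯ × 𝕊^m`. -/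
def InfNormH {n mv : ℕ} (p : PSpace (fun _ : Fin (n + 1) => mv + 1)) : ℝ :=
  sSup {r : ℝ | ∃ a : Fin (n + 1) → Fin (mv + 1) → ℝ,
    (∀ i, ∑ j, a i j ^ 2 = 1) ∧
    r = |MvPolynomial.eval (fun v : Σ _ : Fin (n + 1), Fin (mv + 1) => a v.1 v.2) p|}

/-- `p` is homogeneous of degree `d` in each block of variables separately. -/
def MultiHomog {n : ℕ} (m : Fin (n + 1) → ℕ) (d : ℕ) (p : PSpace m) : Prop :=
  ∀ s ∈ p.support, ∀ i : Fin (n + 1), (∑ j : Fin (m i), s ⟨i, j⟩) = d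

/-- `M` is a separable matrix: a sum of elementary tensors of psd matrices. -/
def SepGram {n : ℕ} {mv d : ℕ}
    (M : Matrix (Fin (n + 1) → MonH mv d) (Fin (n + 1) → MonH mv d) ℝ) : Prop :=
  ∃ (N : ℕ) (Ms : Fin N → ∀ _ : Fin (n + 1), Matrix (MonH mv d) (MonH mv d) ℝ),
    (∀ j i, (Ms j i).PosSemidef) ∧
    ∀ k k', M k k' = ∑ j : Fin N, ∏ i : Fin (n + 1), Ms j i (k i) (k' i)

/-- `μ(p)`: the smallest `λ > 0` such that `p = λ·𝒢(M)` for some `G`-invariant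
subnormalized separable matrix `M`. -/
def muP {n : ℕ} {Ω : Finset (Fin (n + 1)) → ℕ} {G : Type} [Group G] (mv d : ℕ) (A : GAct Ω G)
    (p : PSpace (fun _ : Fin (n + 1) => mv + 1)) : ℝ :=
  sInf {l : ℝ | 0 < l ∧
    ∃ M : Matrix (Fin (n + 1) → MonH mv d) (Fin (n + 1) → MonH mv d) ℝ,
      SepGram M ∧ (∑ k, M k k) ≤ 1 ∧
      (∀ (g : G) (k k' : Fin (n + 1) → MonH mv d),
        M (fun i => k (A.act g i)) (fun i => k' (A.act g i)) = M k k') ∧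
      p = l • gramH M}

/-! ### Factorizability -/

/-- `(Ω,G)` is factorizable. -/
def Factorizable (A : GAct Ω G) : Prop :=
  ∀ N : ℕ, ∃ Cf : ∀ i : Fin (n + 1), (MFi Ω i → Fin N) → ℝ,
    (∀ i β, 0 < Cf i β) ∧
    (∀ (g : G) (i : Fin (n + 1)) (β : MFi Ω i → Fin N),
      Cf (A.act g i) (A.shift g i β) = Cf i β) ∧
    ∀ α : MultiFacet Ω → Fin N,
      (∏ i : Fin (n + 1), Cf i (restr α i)) =
        ((Fintype.card {γ : MultiFacet Ω → Fin N //
          ∃ gs : Fin (n + 1) → G, ∀ i : Fin (n + 1), A.act (gs i) i = i ∧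
            ∀ F : MFi Ω i, γ (A.actF (gs i)⁻¹ F.1) = α F.1} : ℕ) : ℝ)⁻¹

/-! ### Two-block (single edge `Λ₁`) ranks -/

/-- The single-edge rank of a two-block polynomial. -/
def rank1 {mv : ℕ} (p : MvPolynomial (Fin mv ⊕ Fin mv) ℝ) : ℕ∞ :=
  ⨅ r : {r : ℕ // ∃ f g : Fin r → MvPolynomial (Fin mv) ℝ,
    p = ∑ α : Fin r, rename Sum.inl (f α) * rename Sum.inr (g α)}, (r.1 : ℕ∞)

/-- The single-edge separable rank (w.r.t. the local sos cones). -/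
def sep1 {mv : ℕ} (p : MvPolynomial (Fin mv ⊕ Fin mv) ℝ) : ℕ∞ :=
  ⨅ r : {r : ℕ // ∃ f g : Fin r → MvPolynomial (Fin mv) ℝ,
    (∀ α, IsSos (f α) ∧ IsSos (g α)) ∧
    p = ∑ α : Fin r, rename Sum.inl (f α) * rename Sum.inr (g α)}, (r.1 : ℕ∞)

/-- The single-edge sos rank. -/
def sos1 {mv : ℕ} (p : MvPolynomial (Fin mv ⊕ Fin mv) ℝ) : ℕ∞ :=
  ⨅ r : {r : ℕ // ∃ (s₀ s₁ : ℕ) (a : Fin s₀ → Fin r → MvPolynomial (Fin mv) ℝ)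
    (b : Fin s₁ → Fin r → MvPolynomial (Fin mv) ℝ),
    p = ∑ k : Fin s₀, ∑ l : Fin s₁,
      (∑ α : Fin r, rename Sum.inl (a k α) * rename Sum.inr (b l α)) ^ 2}, (r.1 : ℕ∞)

/-- The Euclidean-distance-matrix polynomial `p_m = ∑ (i-j)² xᵢ² yⱼ²`. -/
def pm (mv : ℕ) : MvPolynomial (Fin mv ⊕ Fin mv) ℝ :=
  ∑ i : Fin mv, ∑ j : Fin mv,
    MvPolynomial.C (((i : ℕ) : ℝ) - ((j : ℕ) : ℝ)) ^ 2 *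
      (X (Sum.inl i) ^ 2 * X (Sum.inr j) ^ 2)


/-- Constant block sizes are trivially compatible with any group action. -/
theorem constCompat {n : ℕ} {Ω : Finset (Fin (n + 1)) → ℕ} {G : Type} [Group G]
    (A : GAct Ω G) (mv : ℕ) :
    ∀ (g : G) (i : Fin (n + 1)),
      (fun _ : Fin (n + 1) => mv) (A.act g i) = (fun _ : Fin (n + 1) => mv) i :=
  fun _ _ => rfl
section Helpers


variable {n : ℕ} {Ω : Finset (Fin (n + 1)) → ℕ} {G : Type} [Group G]

lemma exists_facet_mem (hΩ : IsWSC Ω) (i : Fin (n + 1)) :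
    ∃ F : Finset (Fin (n + 1)), IsFacet Ω F ∧ i ∈ F := by
  classical
  set S : Finset (Finset (Fin (n + 1))) :=
    Finset.univ.filter (fun S => Ω S ≠ 0 ∧ i ∈ S) with hS
  have hne : S.Nonempty := ⟨{i}, by simp [hS, hΩ.2 i]⟩
  obtain ⟨F, hF, hmax⟩ := S.exists_max_image (fun s => s.card) hne
  have hF' : Ω F ≠ 0 ∧ i ∈ F := by simpa [hS] using hF
  refine ⟨F, ⟨hF'.1, fun T hT hFT => ?_⟩, hF'.2⟩
  have hTin : T ∈ S := by simp [hS, hT, hFT hF'.2]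
  exact (Finset.eq_of_subset_of_card_le hFT (hmax T hTin)).symm

lemma nonempty_MFi (hΩ : IsWSC Ω) (i : Fin (n + 1)) : Nonempty (MFi Ω i) := by
  obtain ⟨F, hF, hi⟩ := exists_facet_mem hΩ i
  exact ⟨⟨⟨⟨F, hF⟩, ⟨0, Nat.pos_of_ne_zero hF.1⟩⟩, hi⟩⟩

lemma card_fun_le (hΩ : IsWSC Ω) (i : Fin (n + 1)) (r : ℕ) :
    Fintype.card (MFi Ω i → Fin r) ≤ Fintype.card (MultiFacet Ω → Fin r) := by
  classical
  rw [Fintype.card_fun, Fintype.card_fun, Fintype.card_fin]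
  rcases Nat.eq_zero_or_pos r with h0 | h1
  · subst h0
    have hpos : 0 < Fintype.card (MFi Ω i) := Fintype.card_pos_iff.mpr (nonempty_MFi hΩ i)
    rw [zero_pow hpos.ne']
    exact Nat.zero_le _
  · exact Nat.pow_le_pow_right h1 (Fintype.card_subtype_le _)

def mcast {I : Type} {a b : Fin (n + 1)} (h : a = b) (β : MFi Ω a → I) : MFi Ω b → I :=
  fun F => β ⟨F.1, by rw [h]; exact F.2⟩

lemma mcast_eq_self {I : Type} {a : Fin (n + 1)} (h : a = a) (β : MFi Ω a → I) :
    mcast h β = β :=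
  funext fun F => congrArg β (Subtype.ext rfl)


def pull (A : GAct Ω G) (g : G) (ρ : Fin (n + 1)) {I : Type}
    (β : MFi Ω (A.act g ρ) → I) : MFi Ω ρ → I :=
  fun F => β ⟨A.actF g F.1, by rw [A.collapse]; exact Finset.mem_image_of_mem _ F.2⟩

lemma psd_fac {ι : Type} [Fintype ι] [DecidableEq ι] {M : Matrix ι ι ℝ}
    (h : M.PosSemidef) : ∃ B : ι → ι → ℝ, ∀ a b, M a b = ∑ c, B c a * B c b := by
  open scoped MatrixOrder in
  obtain ⟨B, hB⟩ := CStarAlgebra.nonneg_iff_eq_star_mul_self.mp h.nonneg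
  refine ⟨fun c a => B c a, fun a b => ?_⟩
  rw [hB]
  simp [Matrix.mul_apply, Matrix.conjTranspose_apply, Matrix.star_eq_conjTranspose]

lemma psd_fac_pad {ι κ : Type} [Fintype ι] [Fintype κ] [DecidableEq ι]
    (hc : Fintype.card ι ≤ Fintype.card κ) {M : Matrix ι ι ℝ} (h : M.PosSemidef) :
    ∃ B : κ → ι → ℝ, ∀ a b, M a b = ∑ c, B c a * B c b := by
  classical
  obtain ⟨B0, hB0⟩ := psd_fac h
  obtain ⟨e⟩ := Function.Embedding.nonempty_of_card_le hc
  refine ⟨fun c a => Function.extend e (fun c' => B0 c' a) 0 c, fun a b => ?_⟩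
  rw [hB0 a b]
  have hz : ∀ x ∈ (Finset.univ : Finset κ), x ∉ Finset.univ.map e →
      Function.extend e (fun c' => B0 c' a) 0 x * Function.extend e (fun c' => B0 c' b) 0 x
        = 0 := by
    intro x _ hx
    have hnx : ¬∃ c', e c' = x := by simpa [Finset.mem_map] using hx
    rw [Function.extend_apply' _ _ _ hnx]
    simp
  rw [← Finset.sum_subset (Finset.subset_univ _) hz, Finset.sum_map]
  refine Finset.sum_congr rfl fun c' _ => ?_
  show B0 c' a * B0 c' b =
    Function.extend (⇑e) (fun c' => B0 c' a) 0 (e c') *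
      Function.extend (⇑e) (fun c' => B0 c' b) 0 (e c')
  rw [e.injective.extend_apply, e.injective.extend_apply]

lemma key_alg {ι J : Type} [DecidableEq ι] [Fintype ι] [Fintype J] (s : ι → ℕ)
    (u : ∀ i : ι, Fin (s i) → J → ℝ) :
    ∑ k : (∀ i, Fin (s i)), (∑ a : J, ∏ i, u i (k i) a) ^ 2
      = ∑ a : J, ∑ a' : J, ∏ i, (∑ kk : Fin (s i), u i kk a * u i kk a') := by
  classical
  simp_rw [sq, Finset.sum_mul_sum, ← Finset.prod_mul_distrib]
  rw [Finset.sum_comm]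
  refine Finset.sum_congr rfl fun a _ => ?_
  rw [Finset.sum_comm]
  refine Finset.sum_congr rfl fun a' _ => ?_
  rw [Finset.prod_univ_sum, Fintype.piFinset_univ]

end Helpers

section Directions

variable {n : ℕ} {Ω : Finset (Fin (n + 1)) → ℕ} {G : Type} [Group G]

set_option maxHeartbeats 1000000 in
lemma dir1 {mv : ℕ} (A : GAct Ω G) (T : (Fin (n + 1) → Fin mv) → ℝ) {r : ℕ}
    (h : HasSosOGDec A (constCompat A mv) (pT mv T) r) : HasPsdTOGDec A mv T r := by
  classical
  obtain ⟨s, hs, q, hp, hinv⟩ := h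
  set φ : Fin mv → Fin mv → ℝ := fun j j' => if j' = j then 1 else 0 with hφ
  set w : ∀ i : Fin (n + 1), Fin (s i) → (MFi Ω i → Fin r) → Fin mv → ℝ :=
    fun i kk β j => MvPolynomial.eval (φ j) (q i kk β) with hw
  refine ⟨fun i j => Matrix.of (fun β β' => ∑ kk, w i kk β j * w i kk β' j), ?_, ?_, ?_⟩
  · intro i j
    show Matrix.PosSemidef (Matrix.of fun β β' => ∑ kk, w i kk β j * w i kk β' j)
    have hEq : Matrix.conjTranspose
            (Matrix.of fun (kk : Fin (s i)) (β : MFi Ω i → Fin r) => w i kk β j)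
          * (Matrix.of fun (kk : Fin (s i)) (β : MFi Ω i → Fin r) => w i kk β j)
        = (Matrix.of fun β β' => ∑ kk, w i kk β j * w i kk β' j) := by
      ext β β'
      simp [Matrix.mul_apply, Matrix.conjTranspose_apply]
    rw [← hEq]
    exact Matrix.posSemidef_conjTranspose_mul_self _
  · intro g i j β β'
    show (Matrix.of fun β β' => ∑ kk : Fin (s (A.act g i)), w (A.act g i) kk β j * w (A.act g i) kk β' j)
        (A.shift g i β) (A.shift g i β')
      = (Matrix.of fun β β' => ∑ kk : Fin (s i), w i kk β j * w i kk β' j) β β'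
    rw [Matrix.of_apply, Matrix.of_apply]
    refine Fintype.sum_equiv (finCongr (hs g i)) _ _ (fun kk => ?_)
    have hwe : ∀ γ : MFi Ω i → Fin r,
        w (A.act g i) kk (A.shift g i γ) j = w i (finCongr (hs g i) kk) γ j := by
      intro γ
      have h1 := hinv g i (finCongr (hs g i) kk) γ
      have h2 : (Fin.cast (constCompat A mv g i) : Fin mv → Fin mv) = id :=
        funext fun x => Fin.ext rfl
      rw [h2, rename_id, AlgHom.id_apply] at h1
      have h3 : Fin.cast (hs g i).symm (finCongr (hs g i) kk) = kk := Fin.ext rfl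
      rw [h3] at h1
      simp only [hw]
      rw [h1]
    rw [hwe β, hwe β']
  · intro jf
    have hL : MvPolynomial.eval
        (fun v : Σ _ : Fin (n + 1), Fin mv => φ (jf v.1) v.2) (pT mv T) = T jf := by
      rw [pT, map_sum]
      rw [Finset.sum_eq_single_of_mem jf (Finset.mem_univ _)]
      · simp [hφ]
      · intro b _ hb
        obtain ⟨i0, hi0⟩ := Function.ne_iff.mp hb
        rw [map_mul, map_prod]
        refine mul_eq_zero_of_right _ (Finset.prod_eq_zero (Finset.mem_univ i0) ?_)
        rw [map_pow, eval_X]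
        simp [hφ, hi0]
    have hR : ∀ (k : ∀ i : Fin (n + 1), Fin (s i)) (α : MultiFacet Ω → Fin r)
        (i : Fin (n + 1)),
        MvPolynomial.eval (fun v : Σ _ : Fin (n + 1), Fin mv => φ (jf v.1) v.2)
          (emb (fun _ => mv) i (q i (k i) (restr α i)))
          = w i (k i) (restr α i) (jf i) := by
      intro k α i
      rw [show emb (fun _ : Fin (n + 1) => mv) i (q i (k i) (restr α i))
            = rename (fun j => (⟨i, j⟩ : Σ _ : Fin (n + 1), Fin mv))
                (q i (k i) (restr α i)) from rfl,
          eval_rename]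
      rfl
    have heval := congrArg
      (MvPolynomial.eval (fun v : Σ _ : Fin (n + 1), Fin mv => φ (jf v.1) v.2)) hp
    rw [hL] at heval
    have hR2 : MvPolynomial.eval (fun v : Σ _ : Fin (n + 1), Fin mv => φ (jf v.1) v.2)
        (∑ k : ∀ i : Fin (n + 1), Fin (s i),
          (∑ α : MultiFacet Ω → Fin r, ∏ i, emb (fun _ => mv) i (q i (k i) (restr α i))) ^ 2)
        = ∑ k : ∀ i : Fin (n + 1), Fin (s i),
            (∑ α : MultiFacet Ω → Fin r, ∏ i, w i (k i) (restr α i) (jf i)) ^ 2 := by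
      rw [map_sum]
      refine Finset.sum_congr rfl fun k _ => ?_
      rw [map_pow]
      refine congrArg (· ^ 2) ?_
      rw [map_sum]
      refine Finset.sum_congr rfl fun α _ => ?_
      rw [map_prod]
      exact Finset.prod_congr rfl fun i _ => hR k α i
    rw [hR2] at heval
    refine heval.trans ((key_alg s (fun i kk α => w i kk (restr α i) (jf i))).trans ?_)
    refine Finset.sum_congr rfl fun α _ => Finset.sum_congr rfl fun α' _ =>
      Finset.prod_congr rfl fun i _ => rfl

set_option maxHeartbeats 2000000 in
lemma dir2 {mv : ℕ} (hΩ : IsWSC Ω) [Fintype G] (A : GAct Ω G)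
    (hfree : ∀ (g : G) (i : Fin (n + 1)), A.act g i = i → g = 1)
    (T : (Fin (n + 1) → Fin mv) → ℝ) {r : ℕ}
    (h : HasPsdTOGDec A mv T r) : HasSosOGDec A (constCompat A mv) (pT mv T) r := by
  classical
  obtain ⟨E, hpsd, hequi, hT⟩ := h
  -- orbit representatives
  set orb : Fin (n + 1) → Finset (Fin (n + 1)) :=
    fun i => Finset.image (fun g : G => A.act g i) Finset.univ with horb
  have horb_mem : ∀ i, i ∈ orb i := fun i =>
    Finset.mem_image.mpr ⟨1, Finset.mem_univ _, by simp⟩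
  have horb_smul : ∀ (g : G) (i), orb (A.act g i) = orb i := by
    intro g i
    ext j
    simp only [horb, Finset.mem_image, Finset.mem_univ, true_and]
    constructor
    · rintro ⟨g', rfl⟩
      exact ⟨g' * g, by rw [map_mul]; rfl⟩
    · rintro ⟨g', rfl⟩
      refine ⟨g' * g⁻¹, ?_⟩
      rw [map_mul, Equiv.Perm.mul_apply, map_inv, Equiv.Perm.inv_def, Equiv.symm_apply_apply]
  have min'_congr : ∀ {s t : Finset (Fin (n + 1))} (h : s = t) (hs : s.Nonempty),
      s.min' hs = t.min' (h ▸ hs) := by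
    intro s t h hs; subst h; rfl
  set R : Fin (n + 1) → Fin (n + 1) := fun i => (orb i).min' ⟨i, horb_mem i⟩ with hRdef
  have hR : ∀ (g : G) (i), R (A.act g i) = R i := fun g i =>
    min'_congr (horb_smul g i) _
  have hsec : ∀ i, ∃ g : G, A.act g (R i) = i := by
    intro i
    have hm : R i ∈ orb i := Finset.min'_mem _ _
    simp only [horb, Finset.mem_image, Finset.mem_univ, true_and] at hm
    obtain ⟨g, hg⟩ := hm
    refine ⟨g⁻¹, ?_⟩
    rw [← hg, map_inv, Equiv.Perm.inv_def, Equiv.symm_apply_apply]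
  choose gsec hgsec using hsec
  have uniq : ∀ (g g' : G) (ρ : Fin (n + 1)), A.act g ρ = A.act g' ρ → g = g' := by
    intro g g' ρ hgg
    have h1 : A.act (g'⁻¹ * g) ρ = ρ := by
      rw [map_mul, Equiv.Perm.mul_apply, hgg, map_inv, Equiv.Perm.inv_def, Equiv.symm_apply_apply]
    exact (inv_mul_eq_one.mp (hfree _ _ h1)).symm
  -- factorizations of the psd matrices, padded to a common size
  set D := Fintype.card (MultiFacet Ω → Fin r) with hD
  have hfacex : ∀ (ρ : Fin (n + 1)) (j : Fin mv),
      ∃ B : Fin D → (MFi Ω ρ → Fin r) → ℝ,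
        ∀ a b, E ρ j a b = ∑ c, B c a * B c b := by
    intro ρ j
    refine psd_fac_pad ?_ (hpsd ρ j)
    rw [Fintype.card_fin]
    exact card_fun_le hΩ ρ r
  choose Bm hBm using hfacex
  -- pull a function on `ℱ̃_i` back to one on `ℱ̃_{R i}`
  set τ : ∀ i : Fin (n + 1), (MFi Ω i → Fin r) → (MFi Ω (R i) → Fin r) :=
    fun i β => pull A (gsec i) (R i) (mcast (hgsec i).symm β) with hτ
  set Bv : ∀ i : Fin (n + 1), Fin mv → Fin D → (MFi Ω i → Fin r) → ℝ :=
    fun i j t β => Bm (R i) j t (τ i β) with hBv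
  have shift_pull : ∀ (g : G) (ρ : Fin (n + 1)) (β : MFi Ω (A.act g ρ) → Fin r),
      A.shift g ρ (pull A g ρ β) = β := by
    intro g ρ β
    funext F
    refine congrArg β (Subtype.ext ?_)
    show A.actF g (A.actF g⁻¹ F.1) = F.1
    rw [map_inv, Equiv.Perm.inv_def, Equiv.apply_symm_apply]
  have E_mcast : ∀ (a b : Fin (n + 1)) (hab : a = b) (j : Fin mv)
      (β β' : MFi Ω b → Fin r),
      E a j (mcast hab.symm β) (mcast hab.symm β') = E b j β β' := by
    intro a b hab
    subst hab
    intro j β β'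
    rw [mcast_eq_self, mcast_eq_self]
  have fact_a : ∀ (i : Fin (n + 1)) (j : Fin mv) (β β' : MFi Ω i → Fin r),
      (∑ t : Fin D, Bv i j t β * Bv i j t β') = E i j β β' := by
    intro i j β β'
    have h1 : (∑ t : Fin D, Bv i j t β * Bv i j t β')
        = E (R i) j (τ i β) (τ i β') := (hBm (R i) j _ _).symm
    have h2 := hequi (gsec i) (R i) j (τ i β) (τ i β')
    simp only [hτ] at h2
    rw [shift_pull, shift_pull] at h2
    simp only [hτ] at h1
    rw [h1, ← h2]
    exact E_mcast _ _ (hgsec i) j β β'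
  have hBm_congr : ∀ (a b : Fin (n + 1)) (hab : a = b) (j : Fin mv) (t : Fin D)
      (γ : MFi Ω a → Fin r), Bm a j t γ = Bm b j t (mcast hab γ) := by
    intro a b hab
    subst hab
    intro j t γ
    rw [mcast_eq_self]
  have fact_b : ∀ (g : G) (i : Fin (n + 1)) (j : Fin mv) (t : Fin D)
      (β : MFi Ω i → Fin r), Bv (A.act g i) j t (A.shift g i β) = Bv i j t β := by
    intro g i j t β
    simp only [hBv]
    rw [hBm_congr _ _ (hR g i) j t]
    congr 1
    -- mcast (hR g i) (τ (A.act g i) (A.shift g i β)) = τ i β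
    funext F
    have hkey : g⁻¹ * gsec (A.act g i) = gsec i := by
      refine uniq _ _ (R i) ?_
      rw [hgsec i]
      have h5 := hgsec (A.act g i)
      rw [hR g i] at h5
      rw [map_mul, Equiv.Perm.mul_apply, h5, map_inv, Equiv.Perm.inv_def, Equiv.symm_apply_apply]
    show A.shift g i β
        ⟨A.actF (gsec (A.act g i))
          (⟨F.1, by rw [hR g i]; exact F.2⟩ : MFi Ω (R (A.act g i))).1, _⟩ = τ i β F
    simp only [hτ, GAct.shift, pull, mcast]
    refine congrArg β (Subtype.ext ?_)
    show A.actF g⁻¹ (A.actF (gsec (A.act g i)) F.1) = A.actF (gsec i) F.1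
    rw [← hkey, map_mul, Equiv.Perm.mul_apply]
  -- assemble the sos decomposition
  refine ⟨fun _ => mv * D, fun _ _ => rfl,
    fun i kk β => MvPolynomial.C (Bv i (finProdFinEquiv.symm kk).1
        (finProdFinEquiv.symm kk).2 β) * X (finProdFinEquiv.symm kk).1, ?_, ?_⟩
  · -- main identity
    have hsummand : ∀ (k : Fin (n + 1) → Fin (mv * D)),
        (∑ α : MultiFacet Ω → Fin r, ∏ i : Fin (n + 1),
            emb (fun _ => mv) i (MvPolynomial.C (Bv i (finProdFinEquiv.symm (k i)).1
              (finProdFinEquiv.symm (k i)).2 (restr α i))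
                * X (finProdFinEquiv.symm (k i)).1)) ^ 2
          = MvPolynomial.C ((∑ α : MultiFacet Ω → Fin r, ∏ i : Fin (n + 1),
              Bv i (finProdFinEquiv.symm (k i)).1 (finProdFinEquiv.symm (k i)).2
                (restr α i)) ^ 2)
            * ∏ i : Fin (n + 1),
                (X (⟨i, (finProdFinEquiv.symm (k i)).1⟩ : Σ _ : Fin (n + 1), Fin mv)) ^ 2 := by
      intro k
      have hterm : ∀ α : MultiFacet Ω → Fin r,
          (∏ i : Fin (n + 1), emb (fun _ => mv) i
            (MvPolynomial.C (Bv i (finProdFinEquiv.symm (k i)).1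
              (finProdFinEquiv.symm (k i)).2 (restr α i))
                * X (finProdFinEquiv.symm (k i)).1))
          = MvPolynomial.C (∏ i : Fin (n + 1), Bv i (finProdFinEquiv.symm (k i)).1
              (finProdFinEquiv.symm (k i)).2 (restr α i))
            * ∏ i : Fin (n + 1),
                X (⟨i, (finProdFinEquiv.symm (k i)).1⟩ : Σ _ : Fin (n + 1), Fin mv) := by
        intro α
        rw [map_prod, ← Finset.prod_mul_distrib]
        refine Finset.prod_congr rfl fun i _ => ?_
        rw [map_mul]
        exact congrArg₂ (· * ·) (rename_C _ _) (rename_X _ _)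
      calc (∑ α : MultiFacet Ω → Fin r, ∏ i : Fin (n + 1),
            emb (fun _ => mv) i (MvPolynomial.C (Bv i (finProdFinEquiv.symm (k i)).1
              (finProdFinEquiv.symm (k i)).2 (restr α i))
                * X (finProdFinEquiv.symm (k i)).1)) ^ 2
          = (MvPolynomial.C (∑ α : MultiFacet Ω → Fin r, ∏ i : Fin (n + 1),
              Bv i (finProdFinEquiv.symm (k i)).1 (finProdFinEquiv.symm (k i)).2 (restr α i))
            * ∏ i : Fin (n + 1),
                X (⟨i, (finProdFinEquiv.symm (k i)).1⟩ : Σ _ : Fin (n + 1), Fin mv)) ^ 2 := by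
            refine congrArg (· ^ 2) ?_
            rw [map_sum, Finset.sum_mul]
            exact Finset.sum_congr rfl fun α _ => hterm α
        _ = _ := by
            rw [mul_pow, ← map_pow, ← Finset.prod_pow]
    set e : ((Fin (n + 1) → Fin mv) × (Fin (n + 1) → Fin D)) ≃ (Fin (n + 1) → Fin (mv * D)) :=
      { toFun := fun p i => finProdFinEquiv (p.1 i, p.2 i)
        invFun := fun k => (fun i => (finProdFinEquiv.symm (k i)).1,
          fun i => (finProdFinEquiv.symm (k i)).2)
        left_inv := by
          intro p
          refine Prod.ext (funext fun i => ?_) (funext fun i => ?_)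
          · show (finProdFinEquiv.symm (finProdFinEquiv (p.1 i, p.2 i))).1 = p.1 i
            rw [Equiv.symm_apply_apply]
          · show (finProdFinEquiv.symm (finProdFinEquiv (p.1 i, p.2 i))).2 = p.2 i
            rw [Equiv.symm_apply_apply]
        right_inv := by
          intro k
          funext i
          show finProdFinEquiv ((finProdFinEquiv.symm (k i)).1,
            (finProdFinEquiv.symm (k i)).2) = k i
          rw [Prod.mk.eta, Equiv.apply_symm_apply] } with he
    refine Eq.symm ?_
    calc (∑ k : Fin (n + 1) → Fin (mv * D), (∑ α : MultiFacet Ω → Fin r,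
            ∏ i : Fin (n + 1), emb (fun _ => mv) i
              (MvPolynomial.C (Bv i (finProdFinEquiv.symm (k i)).1
                (finProdFinEquiv.symm (k i)).2 (restr α i))
                  * X (finProdFinEquiv.symm (k i)).1)) ^ 2)
        = ∑ k : Fin (n + 1) → Fin (mv * D),
            MvPolynomial.C ((∑ α : MultiFacet Ω → Fin r, ∏ i : Fin (n + 1),
              Bv i (finProdFinEquiv.symm (k i)).1 (finProdFinEquiv.symm (k i)).2
                (restr α i)) ^ 2)
              * ∏ i : Fin (n + 1),
                  (X (⟨i, (finProdFinEquiv.symm (k i)).1⟩ : Σ _ : Fin (n + 1), Fin mv)) ^ 2 :=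
          Finset.sum_congr rfl fun k _ => hsummand k
      _ = ∑ p : (Fin (n + 1) → Fin mv) × (Fin (n + 1) → Fin D),
            MvPolynomial.C ((∑ α : MultiFacet Ω → Fin r, ∏ i : Fin (n + 1),
              Bv i (p.1 i) (p.2 i) (restr α i)) ^ 2)
              * ∏ i : Fin (n + 1),
                  (X (⟨i, p.1 i⟩ : Σ _ : Fin (n + 1), Fin mv)) ^ 2 := by
          rw [← Equiv.sum_comp e]
          refine Finset.sum_congr rfl fun p _ => ?_
          simp only [he, Equiv.coe_fn_mk, Equiv.symm_apply_apply]
      _ = ∑ jf : Fin (n + 1) → Fin mv, ∑ tf : Fin (n + 1) → Fin D,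
            MvPolynomial.C ((∑ α : MultiFacet Ω → Fin r, ∏ i : Fin (n + 1),
              Bv i (jf i) (tf i) (restr α i)) ^ 2)
              * ∏ i : Fin (n + 1),
                  (X (⟨i, jf i⟩ : Σ _ : Fin (n + 1), Fin mv)) ^ 2 := by
          exact Fintype.sum_prod_type (f := fun p : (Fin (n + 1) → Fin mv) × (Fin (n + 1) → Fin D) => MvPolynomial.C
            ((∑ α : MultiFacet Ω → Fin r, ∏ i : Fin (n + 1),
              Bv i (p.1 i) (p.2 i) (restr α i)) ^ 2)
              * ∏ i : Fin (n + 1), (X (⟨i, p.1 i⟩ : Σ _ : Fin (n + 1), Fin mv)) ^ 2)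
      _ = ∑ jf : Fin (n + 1) → Fin mv, MvPolynomial.C (T jf)
              * ∏ i : Fin (n + 1),
                  (X (⟨i, jf i⟩ : Σ _ : Fin (n + 1), Fin mv)) ^ 2 := by
          refine Finset.sum_congr rfl fun jf _ => ?_
          rw [← Finset.sum_mul, ← map_sum]
          refine congrArg (· * ∏ i : Fin (n + 1),
            (X (⟨i, jf i⟩ : Σ _ : Fin (n + 1), Fin mv)) ^ 2) (congrArg MvPolynomial.C ?_)
          refine ((key_alg (fun _ : Fin (n + 1) => D)
            (fun i t α => Bv i (jf i) t (restr α i))).trans ?_).trans (hT jf).symm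
          refine Finset.sum_congr rfl fun α _ => Finset.sum_congr rfl fun α' _ =>
            Finset.prod_congr rfl fun i _ => fact_a i (jf i) _ _
      _ = pT mv T := by rw [pT]
  · -- equivariance
    intro g i kk β
    have h2 : (Fin.cast (constCompat A mv g i) : Fin mv → Fin mv) = id :=
      funext fun x => Fin.ext rfl
    rw [h2, rename_id]
    have h3 : (Fin.cast (Eq.symm ((fun _ _ => rfl : ∀ (g : G) (i : Fin (n + 1)),
        mv * D = mv * D) g i)) kk) = kk := Fin.ext rfl
    rw [h3]
    exact congrArg₂ (· * ·) (congrArg MvPolynomial.C (fact_b g i _ _ β)) rfl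

end Directions

/-- `psd-rank_{(Ω,G)}(T) ≤ sos-rank_{(Ω,G)}(p_T)`, with equality if the action
of `G` on the vertices is free. -/
theorem statement16 {n mv : ℕ} {Ω : Finset (Fin (n + 1)) → ℕ} (hΩ : IsWSC Ω)
    {G : Type} [Group G] [Fintype G] (A : GAct Ω G)
    (T : (Fin (n + 1) → Fin mv) → ℝ) :
    PsdTOGRank A mv T ≤ SosOGRank A (constCompat A mv) (pT mv T) ∧
    ((∀ (g : G) (i : Fin (n + 1)), A.act g i = i → g = 1) →
      PsdTOGRank A mv T = SosOGRank A (constCompat A mv) (pT mv T)) := by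
  constructor
  · exact le_iInf fun rr => iInf_le_of_le ⟨rr.1, dir1 A T rr.2⟩ le_rfl
  · intro hfv
    refine le_antisymm
      (le_iInf fun rr => iInf_le_of_le ⟨rr.1, dir1 A T rr.2⟩ le_rfl)
      (le_iInf fun rr => iInf_le_of_le ⟨rr.1, dir2 hΩ A hfv T rr.2⟩ le_rfl)

end
end PolyDec
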